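/- arXiv:2407.06472 — 3 statements merged into one kernel-verified Lean document; each statement's English description precedes it below -/
import Mathlib

section
/- Let A be an m × n matrix with rational entries. Suppose that for every subset S of the column indices of A there exists a partition of S into two parts S₁ and S₂ such that every entry of the vector (sum of the columns of A indexed by S₁) − (sum of the columns of A indexed by S₂) lies in {−1, 0, 1}. Then A is totally unimodular. -/
lemma camion_ratRange (x : ℚ) :
    x ∈ Set.range (SignType.cast : SignType → ℚ) ↔ x = -1 ∨ x = 0 ∨ x = 1 := by
  constructor
  · rintro ⟨s, rfl⟩
    cases s <;> simp
  · rintro (rfl | rfl | rfl)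
    exacts [⟨-1, by simp⟩, ⟨0, by simp⟩, ⟨1, by simp⟩]

open Matrix Finset in
lemma camion_aux {m n K : ℕ} (A : Matrix (Fin m) (Fin n) ℚ)
    (h : ∀ S : Finset (Fin n), ∃ S₁ S₂ : Finset (Fin n),
      S₁ ∪ S₂ = S ∧ Disjoint S₁ S₂ ∧
      ∀ i : Fin m,
        (∑ j ∈ S₁, A i j) - (∑ j ∈ S₂, A i j) = -1 ∨
        (∑ j ∈ S₁, A i j) - (∑ j ∈ S₂, A i j) = 0 ∨
        (∑ j ∈ S₁, A i j) - (∑ j ∈ S₂, A i j) = 1)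
    (f : Fin (K + 2) → Fin m) (g : Fin (K + 2) → Fin n)
    (hf : Function.Injective f) (hg : Function.Injective g)
    (IH : ∀ k' : ℕ, k' < K + 2 → ∀ f' : Fin k' → Fin m, ∀ g' : Fin k' → Fin n,
      Function.Injective f' → Function.Injective g' →
      (A.submatrix f' g').det ∈ Set.range (SignType.cast : SignType → ℚ)) :
    (A.submatrix f g).det ∈ Set.range (SignType.cast : SignType → ℚ) := by
  classical
  set B : Matrix (Fin (K + 2)) (Fin (K + 2)) ℚ := A.submatrix f g with hB
  -- entries of B are in {-1, 0, 1}
  have hE : ∀ i j, B i j = -1 ∨ B i j = 0 ∨ B i j = 1 := by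
    intro i j
    have := IH 1 (by omega) (fun _ => f i) (fun _ => g j)
      (Function.injective_of_subsingleton _) (Function.injective_of_subsingleton _)
    rwa [camion_ratRange, Matrix.det_fin_one] at this
  -- integer lift of B
  set B' : Matrix (Fin (K + 2)) (Fin (K + 2)) ℤ := Matrix.of (fun i j => (B i j).num) with hB'
  have hB'cast : ∀ i j, ((B' i j : ℤ) : ℚ) = B i j := by
    intro i j
    rcases hE i j with hh | hh | hh <;> simp [hB', hh]
  have hB'mem : ∀ i j, B' i j = -1 ∨ B' i j = 0 ∨ B' i j = 1 := by
    intro i j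
    rcases hE i j with hh | hh | hh <;> simp [hB', hh]
  have hBB' : B'.map (Int.cast : ℤ → ℚ) = B := by
    ext i j
    exact hB'cast i j
  have hdet : ((B'.det : ℤ) : ℚ) = B.det := by
    rw [← hBB']
    simpa [RingHom.mapMatrix_apply] using RingHom.map_det (Int.castRingHom ℚ) B'
  by_cases hd0 : B.det = 0
  · exact ⟨0, by simp [hd0]⟩
  have hd0' : B'.det ≠ 0 := by
    intro hz
    apply hd0
    rw [← hdet, hz, Int.cast_zero]
  -- adjugate entries of B are in {-1, 0, 1}
  have hadjQ : ∀ i j, adjugate B i j = -1 ∨ adjugate B i j = 0 ∨ adjugate B i j = 1 := by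
    intro i j
    rw [Matrix.adjugate_fin_succ_eq_det_submatrix]
    have hsub : B.submatrix j.succAbove i.succAbove
        = A.submatrix (f ∘ j.succAbove) (g ∘ i.succAbove) := rfl
    have hdd := IH (K + 1) (by omega) (f ∘ j.succAbove) (g ∘ i.succAbove)
      (hf.comp Fin.succAbove_right_injective) (hg.comp Fin.succAbove_right_injective)
    rw [camion_ratRange] at hdd
    rw [hsub]
    rcases neg_one_pow_eq_or ℚ (↑j + ↑i) with hp | hp <;>
      rcases hdd with hh | hh | hh <;> rw [hp, hh] <;> norm_num
  have hadj' : ∀ i j, adjugate B' i j = -1 ∨ adjugate B' i j = 0 ∨ adjugate B' i j = 1 := by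
    intro i j
    have hmap : ((adjugate B' i j : ℤ) : ℚ) = adjugate B i j := by
      have := RingHom.map_adjugate (Int.castRingHom ℚ) B'
      have h2 : (Int.castRingHom ℚ).mapMatrix B' = B := by
        ext a b
        exact hB'cast a b
      rw [h2] at this
      rw [← this]
      rfl
    rcases hadjQ i j with hh | hh | hh <;> rw [hh] at hmap
    · left; exact_mod_cast hmap
    · right; left; exact_mod_cast hmap
    · right; right; exact_mod_cast hmap
  -- injectivity of B.mulVec
  have hinj : Function.Injective B.mulVec := by
    rw [Matrix.mulVec_injective_iff_isUnit, Matrix.isUnit_iff_isUnit_det]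
    exact isUnit_iff_ne_zero.mpr hd0
  -- per-column construction
  have col : ∀ c : Fin (K + 2), ∃ y : Fin (K + 2) → ℤ, ∃ d : ℤ, (d = 1 ∨ d = -1) ∧
      B' *ᵥ y = fun i => if i = c then d else 0 := by
    intro c
    set x : Fin (K + 2) → ℤ := fun j => adjugate B' j c with hx
    have hBx : B' *ᵥ x = fun i => if i = c then B'.det else 0 := by
      funext i
      have h1 : (B' * adjugate B') i c = (B' *ᵥ x) i := by
        rw [Matrix.mul_apply]
        rfl
      rw [Matrix.mul_adjugate] at h1
      rw [← h1]
      simp [Matrix.one_apply]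
    set S : Finset (Fin (K + 2)) := Finset.univ.filter (fun j => x j ≠ 0) with hS
    obtain ⟨T₁, T₂, hTu, hTd, hTrow⟩ := h (S.image g)
    set S₁ : Finset (Fin (K + 2)) := S.filter (fun j => g j ∈ T₁) with hS₁
    set S₂ : Finset (Fin (K + 2)) := S.filter (fun j => g j ∈ T₂) with hS₂
    have hT₁ : T₁ = S₁.image g := by
      ext t
      simp only [hS₁, Finset.mem_image, Finset.mem_filter]
      constructor
      · intro ht
        have : t ∈ S.image g := hTu ▸ Finset.mem_union_left _ ht
        obtain ⟨j, hj, rfl⟩ := Finset.mem_image.mp this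
        exact ⟨j, ⟨hj, ht⟩, rfl⟩
      · rintro ⟨j, ⟨hj, ht⟩, rfl⟩
        exact ht
    have hT₂ : T₂ = S₂.image g := by
      ext t
      simp only [hS₂, Finset.mem_image, Finset.mem_filter]
      constructor
      · intro ht
        have : t ∈ S.image g := hTu ▸ Finset.mem_union_right _ ht
        obtain ⟨j, hj, rfl⟩ := Finset.mem_image.mp this
        exact ⟨j, ⟨hj, ht⟩, rfl⟩
      · rintro ⟨j, ⟨hj, ht⟩, rfl⟩
        exact ht
    have hSd : Disjoint S₁ S₂ := by
      rw [Finset.disjoint_left]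
      intro j hj1 hj2
      exact Finset.disjoint_left.mp hTd (Finset.mem_filter.mp hj1).2 (Finset.mem_filter.mp hj2).2
    set y : Fin (K + 2) → ℤ := fun j => if j ∈ S₁ then 1 else if j ∈ S₂ then -1 else 0 with hy
    have hBy : ∀ i, (B' *ᵥ y) i = (∑ j ∈ S₁, B' i j) - (∑ j ∈ S₂, B' i j) := by
      intro i
      have key : ∀ j, B' i j * y j
          = (if j ∈ S₁ then B' i j else 0) - (if j ∈ S₂ then B' i j else 0) := by
        intro j
        by_cases h1 : j ∈ S₁ <;> by_cases h2 : j ∈ S₂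
        · exact absurd h2 (Finset.disjoint_left.mp hSd h1)
        all_goals simp [hy, h1, h2]
      show ∑ j, B' i j * y j = _
      simp_rw [key, Finset.sum_sub_distrib, Finset.sum_ite_mem, Finset.univ_inter]
    have hmemBy : ∀ i, (B' *ᵥ y) i = -1 ∨ (B' *ᵥ y) i = 0 ∨ (B' *ᵥ y) i = 1 := by
      intro i
      have hr := hTrow (f i)
      rw [hT₁, hT₂, Finset.sum_image (fun a _ b _ hab => hg hab),
        Finset.sum_image (fun a _ b _ hab => hg hab)] at hr
      have hcast : (((B' *ᵥ y) i : ℤ) : ℚ)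
          = (∑ j ∈ S₁, A (f i) (g j)) - (∑ j ∈ S₂, A (f i) (g j)) := by
        rw [hBy i]
        push_cast
        congr 1 <;> exact Finset.sum_congr rfl (fun j _ => hB'cast i j)
      rcases hr with hh | hh | hh <;> rw [← hcast] at hh
      · left; exact_mod_cast hh
      · right; left; exact_mod_cast hh
      · right; right; exact_mod_cast hh
    have hSmem : ∀ j, j ∈ S → (j ∈ S₁ ∨ j ∈ S₂) := by
      intro j hj
      have : g j ∈ T₁ ∪ T₂ := by
        rw [hTu]
        exact Finset.mem_image_of_mem g hj
      rcases Finset.mem_union.mp this with ht | ht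
      · exact Or.inl (Finset.mem_filter.mpr ⟨hj, ht⟩)
      · exact Or.inr (Finset.mem_filter.mpr ⟨hj, ht⟩)
    have hpar : ∀ j, (2 : ℤ) ∣ (y j - x j) := by
      intro j
      by_cases hjS : j ∈ S
      · have hx1 : x j = 1 ∨ x j = -1 := by
          have hne : x j ≠ 0 := (Finset.mem_filter.mp hjS).2
          rcases hadj' j c with hh | hh | hh
          · right; exact hh
          · exact absurd hh hne
          · left; exact hh
        have hy1 : y j = 1 ∨ y j = -1 := by
          rcases hSmem j hjS with hj1 | hj2
          · left; simp [hy, hj1]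
          · right
            have hj1 : j ∉ S₁ := fun hc => Finset.disjoint_left.mp hSd hc hj2
            simp [hy, hj1, hj2]
        rcases hx1 with hh | hh <;> rcases hy1 with hh2 | hh2 <;> rw [hh, hh2] <;> decide
      · have hxj : x j = 0 := by
          by_contra hc
          exact hjS (Finset.mem_filter.mpr ⟨Finset.mem_univ j, hc⟩)
        have hj1 : j ∉ S₁ := fun hc => hjS (Finset.mem_filter.mp hc).1
        have hj2 : j ∉ S₂ := fun hc => hjS (Finset.mem_filter.mp hc).1
        have hyj : y j = 0 := by simp [hy, hj1, hj2]
        simp [hxj, hyj]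
    have hpar2 : ∀ i, (2 : ℤ) ∣ ((B' *ᵥ y) i - (B' *ᵥ x) i) := by
      intro i
      have : (B' *ᵥ y) i - (B' *ᵥ x) i = ∑ j, B' i j * (y j - x j) := by
        show (∑ j, B' i j * y j) - (∑ j, B' i j * x j) = _
        rw [← Finset.sum_sub_distrib]
        exact Finset.sum_congr rfl (fun j _ => (mul_sub _ _ _).symm)
      rw [this]
      exact Finset.dvd_sum (fun j _ => Dvd.dvd.mul_left (hpar j) _)
    have hzero : ∀ i, i ≠ c → (B' *ᵥ y) i = 0 := by
      intro i hic
      have h2 := hpar2 i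
      rw [hBx] at h2
      simp only [if_neg hic, sub_zero] at h2
      rcases hmemBy i with hh | hh | hh <;> rw [hh] at h2 <;> omega
    have hdc : (B' *ᵥ y) c ≠ 0 := by
      intro hc0
      have hy0 : (B' *ᵥ y) = 0 := by
        funext i
        by_cases hic : i = c
        · rw [hic]; exact hc0
        · exact hzero i hic
      have hQ : B *ᵥ (fun j => ((y j : ℤ) : ℚ)) = 0 := by
        funext i
        have : (B *ᵥ fun j => ((y j : ℤ) : ℚ)) i = (((B' *ᵥ y) i : ℤ) : ℚ) := by
          show ∑ j, B i j * ((y j : ℤ) : ℚ) = (((∑ j, B' i j * y j : ℤ)) : ℚ)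
          push_cast
          exact Finset.sum_congr rfl (fun j _ => by rw [hB'cast i j])
        rw [this, hy0]
        simp
      have hy0' : (fun j => ((y j : ℤ) : ℚ)) = 0 := by
        apply hinj
        rw [hQ, Matrix.mulVec_zero]
      -- but y is nonzero since x is nonzero
      have hxne : ∃ j, x j ≠ 0 := by
        by_contra hc
        push_neg at hc
        have : x = 0 := funext hc
        have h3 := congrFun hBx c
        rw [this, Matrix.mulVec_zero, if_pos rfl] at h3
        exact hd0' (by rw [← h3]; rfl)
      obtain ⟨j, hjne⟩ := hxne
      have hjS : j ∈ S := Finset.mem_filter.mpr ⟨Finset.mem_univ j, hjne⟩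
      have hyj : y j ≠ 0 := by
        rcases hSmem j hjS with hj1 | hj2
        · simp [hy, hj1]
        · have hj1 : j ∉ S₁ := fun hcc => Finset.disjoint_left.mp hSd hcc hj2
          simp [hy, hj1, hj2]
      apply hyj
      have := congrFun hy0' j
      simp only [Pi.zero_apply] at this
      exact_mod_cast this
    refine ⟨y, (B' *ᵥ y) c, ?_, ?_⟩
    · rcases hmemBy c with hh | hh | hh
      · right; exact hh
      · exact absurd hh hdc
      · left; exact hh
    · funext i
      by_cases hic : i = c
      · rw [hic, if_pos rfl]
      · rw [if_neg hic]
        exact hzero i hic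
  -- assemble the matrix C with columns y
  choose Y d hd hBY using col
  set C : Matrix (Fin (K + 2)) (Fin (K + 2)) ℤ := Matrix.of (fun j c => Y c j) with hC
  have hBC : B' * C = Matrix.diagonal d := by
    ext i c
    have h1 : (B' * C) i c = (B' *ᵥ Y c) i := by
      rw [Matrix.mul_apply]
      rfl
    rw [h1, hBY c]
    by_cases hic : i = c
    · subst hic
      simp [Matrix.diagonal_apply_eq]
    · simp [hic, Matrix.diagonal_apply_ne _ hic]
  have hdetmul : B'.det * C.det = ∏ c, d c := by
    rw [← Matrix.det_mul, hBC, Matrix.det_diagonal]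
  have hprodunit : IsUnit (∏ c, d c) := by
    apply IsUnit.of_mul_eq_one (∏ c, d c)
    rw [← Finset.prod_mul_distrib]
    apply Finset.prod_eq_one
    intro c _
    rcases hd c with hh | hh <;> rw [hh] <;> ring
  have hunit : IsUnit B'.det := isUnit_of_mul_isUnit_left (hdetmul ▸ hprodunit)
  rcases Int.isUnit_iff.mp hunit with hh | hh
  · exact ⟨1, by rw [← hdet, hh]; simp⟩
  · exact ⟨-1, by rw [← hdet, hh]; simp⟩

/-- Camion's characterization (column version): if every subset `S` of the columns of `A`
can be partitioned into two parts `S₁`, `S₂` such that every entry of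
(sum of columns in `S₁`) − (sum of columns in `S₂`) lies in `{-1, 0, 1}`,
then `A` is totally unimodular. -/
theorem camion_column_criterion_totallyUnimodular {m n : ℕ}
    (A : Matrix (Fin m) (Fin n) ℚ)
    (h : ∀ S : Finset (Fin n), ∃ S₁ S₂ : Finset (Fin n),
      S₁ ∪ S₂ = S ∧ Disjoint S₁ S₂ ∧
      ∀ i : Fin m,
        (∑ j ∈ S₁, A i j) - (∑ j ∈ S₂, A i j) = -1 ∨
        (∑ j ∈ S₁, A i j) - (∑ j ∈ S₂, A i j) = 0 ∨
        (∑ j ∈ S₁, A i j) - (∑ j ∈ S₂, A i j) = 1) :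
    A.IsTotallyUnimodular := by
  intro k
  induction k using Nat.strong_induction_on with
  | _ k IH =>
    intro f g hf hg
    match k, f, g, hf, hg, IH with
    | 0, f, g, hf, hg, IH =>
      exact ⟨1, by simp [Matrix.det_fin_zero]⟩
    | 1, f, g, hf, hg, IH =>
      rw [camion_ratRange, Matrix.det_fin_one, Matrix.submatrix_apply]
      obtain ⟨S₁, S₂, hu, hd, hrow⟩ := h {g 0}
      have hrow0 := hrow (f 0)
      have hsub1 : S₁ ⊆ {g 0} := hu ▸ Finset.subset_union_left
      have hsub2 : S₂ ⊆ {g 0} := hu ▸ Finset.subset_union_right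
      have hmem : g 0 ∈ S₁ ∪ S₂ := hu ▸ Finset.mem_singleton_self (g 0)
      rcases Finset.mem_union.mp hmem with h1 | h2
      · have e1 : S₁ = {g 0} := Finset.Subset.antisymm hsub1 (Finset.singleton_subset_iff.mpr h1)
        have e2 : S₂ = ∅ := by
          rw [Finset.eq_empty_iff_forall_notMem]
          intro t ht
          have : t = g 0 := Finset.mem_singleton.mp (hsub2 ht)
          exact Finset.disjoint_left.mp hd h1 (this ▸ ht)
        rw [e1, e2] at hrow0
        simpa using hrow0
      · have e2 : S₂ = {g 0} := Finset.Subset.antisymm hsub2 (Finset.singleton_subset_iff.mpr h2)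
        have e1 : S₁ = ∅ := by
          rw [Finset.eq_empty_iff_forall_notMem]
          intro t ht
          have : t = g 0 := Finset.mem_singleton.mp (hsub1 ht)
          exact Finset.disjoint_left.mp hd (this ▸ ht) h2
        rw [e1, e2] at hrow0
        simp only [Finset.sum_empty, Finset.sum_singleton, zero_sub] at hrow0
        rcases hrow0 with hh | hh | hh
        · right; right; linarith
        · right; left; linarith
        · left; linarith
    | (K + 2), f, g, hf, hg, IH =>
      exact camion_aux A h f g hf hg IH
end

section
/- Let A be an m × n matrix with rational entries that is totally unimodular, and let b be a vector in ℚ^m all of whose entries are integers. Then every extreme point of the polyhedron P = { x ∈ ℚ^n : A x ≤ b (componentwise) } has all entries integer. -/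
/-!
At an extreme point `x` of `{x | A x ≤ b}` the rows of `A` that are active at `x` have trivial
kernel: a nonzero kernel vector `w` could be followed a little in both directions without leaving
the polyhedron, exhibiting `x` as the midpoint of `x ± ε w`. Hence some `n` active rows form a
nonsingular square submatrix `B`, and `B x` is the integral vector of the corresponding entries of
`b`. Total unimodularity makes `B` an integer matrix of determinant `±1`, so `B⁻¹` is integral, and
so is `x = B⁻¹ (B x)`.
-/

open Filter Topology Module

namespace Matrix

variable {κ ι R K : Type*}

def activeRows [Fintype ι] [NonUnitalNonAssocSemiring K] (A : Matrix κ ι K) (b : κ → K)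
    (x : ι → K) : Matrix {i // (A *ᵥ x) i = b i} ι K :=
  A.submatrix Subtype.val id

@[simp]
theorem activeRows_mulVec [Fintype ι] [NonUnitalNonAssocSemiring K] (A : Matrix κ ι K) (b : κ → K)
    (x w : ι → K) (i : {i // (A *ᵥ x) i = b i}) :
    (A.activeRows b x *ᵥ w) i = (A *ᵥ w) i :=
  rfl

theorem mulVec_activeRows_injective_of_mem_extremePoints [Fintype ι] [Finite κ] [Field K]
    [LinearOrder K] [IsStrictOrderedRing K] [TopologicalSpace K] [OrderTopology K]
    {A : Matrix κ ι K} {b : κ → K} {x : ι → K}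
    (hx : x ∈ Set.extremePoints K {y | A *ᵥ y ≤ b}) :
    Function.Injective (A.activeRows b x).mulVec := by
  suffices h : ∀ w, (∀ i, (A *ᵥ x) i = b i → (A *ᵥ w) i = 0) → w = 0 by
    intro w₁ w₂ hw
    refine sub_eq_zero.1 (h _ fun i hi => ?_)
    simpa [mulVec_sub, sub_eq_zero] using congrFun hw ⟨i, hi⟩
  intro w hw
  have hmove : ∀ᶠ ε in 𝓝 (0 : K), A *ᵥ (x + ε • w) ≤ b := by
    simp only [Pi.le_def, mulVec_add, mulVec_smul, Pi.add_apply, Pi.smul_apply, smul_eq_mul]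
    refine eventually_all.2 fun i => ?_
    rcases (hx.1 i).lt_or_eq with hlt | htight
    · have hcont : Continuous fun ε : K => (A *ᵥ x) i + ε * (A *ᵥ w) i := by fun_prop
      exact hcont.continuousAt.eventually_lt continuousAt_const (by simpa using hlt) |>.mono
        fun _ h => h.le
    · exact Eventually.of_forall fun ε => by simp [htight, hw i htight]
  have hneg : ∀ᶠ ε in 𝓝 (0 : K), A *ᵥ (x + (-ε) • w) ≤ b :=
    (continuous_neg.tendsto' 0 0 neg_zero).eventually hmove
  obtain ⟨ε, hε, hplus, hminus⟩ := (hmove.and hneg).exists_gt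
  have hseg : x ∈ openSegment K (x + ε • w) (x + (-ε) • w) :=
    ⟨1 / 2, 1 / 2, by norm_num, by norm_num, by norm_num, by module⟩
  have hεw : ε • w = 0 := by
    simpa using hx.2 hplus hminus hseg
  exact (smul_eq_zero.1 hεw).resolve_left hε.ne'

theorem exists_submatrix_det_ne_zero_of_mulVec_injective [Finite κ] [Fintype ι] [DecidableEq ι]
    [Field K] {M : Matrix κ ι K} (hM : Function.Injective M.mulVec) :
    ∃ e : ι → κ, (M.submatrix e id).det ≠ 0 := by
  have hspan : Submodule.span K (Set.range M.row) = ⊤ := by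
    refine Submodule.eq_top_of_finrank_eq ?_
    rw [← rank_eq_finrank_span_row, rank, LinearMap.finrank_range_of_inj hM]
  obtain ⟨σ, a, -, hspan_a, hli⟩ := exists_linearIndependent' K M.row
  rw [hspan] at hspan_a
  have : Finite σ := hli.finite
  obtain ⟨f⟩ : Nonempty (ι ≃ σ) := by
    rw [← Finite.card_eq, ← finrank_eq_nat_card_basis (Basis.mk hli hspan_a.ge),
      finrank_pi, Nat.card_eq_fintype_card]
  refine ⟨a ∘ f, ?_⟩
  have hrows : LinearIndependent K (M.submatrix (a ∘ f) id).row := hli.comp f f.injective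
  exact (isUnit_iff_isUnit_det _).1 (linearIndependent_rows_iff_isUnit.1 hrows) |>.ne_zero

section CommRing

variable [CommRing R]

theorem IsTotallyUnimodular.exists_map_intCast_eq {A : Matrix κ ι R} (hA : A.IsTotallyUnimodular) :
    ∃ N : Matrix κ ι ℤ, N.map (↑) = A := by
  choose s hs using hA.apply
  exact ⟨of fun i j => (s i j : ℤ), ext fun i j => by simp [hs]⟩

theorem eq_intCast_comp_of_map_intCast_mulVec_eq [Fintype ι] [DecidableEq ι] {N : Matrix ι ι ℤ}
    (hN : IsUnit N.det) {x : ι → R} {c : ι → ℤ} (hx : N.map (↑) *ᵥ x = (↑) ∘ c) :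
    x = (↑) ∘ (N⁻¹ *ᵥ c) := by
  have hinv : N⁻¹.map (Int.castRingHom R) * N.map (Int.castRingHom R) = 1 := by
    rw [← Matrix.map_mul, nonsing_inv_mul N hN]
    simp
  calc x = (N⁻¹.map (Int.castRingHom R) * N.map (Int.castRingHom R)) *ᵥ x := by
        rw [hinv, one_mulVec]
    _ = (↑) ∘ (N⁻¹ *ᵥ c) := by
        ext i
        rw [← mulVec_mulVec, Int.coe_castRingHom, hx]
        exact (RingHom.map_mulVec (Int.castRingHom R) _ _ i).symm

theorem IsTotallyUnimodular.exists_intCast_eq_of_mulVec_eq_intCast [CharZero R] [Fintype ι]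
    [DecidableEq ι] {B : Matrix ι ι R} (hB : B.IsTotallyUnimodular) (hdet : B.det ≠ 0)
    {x : ι → R} {c : ι → ℤ} (hx : B *ᵥ x = (↑) ∘ c) : ∃ z : ι → ℤ, x = (↑) ∘ z := by
  obtain ⟨N, rfl⟩ := hB.exists_map_intCast_eq
  obtain ⟨s, hs⟩ : (N.map ((↑) : ℤ → R)).det ∈ Set.range SignType.cast := by
    simpa using (isTotallyUnimodular_iff_fintype _).1 hB ι id id
  have hNs : N.det = s := by
    apply Int.cast_injective (α := R)
    rw [SignType.intCast_cast, hs, Int.cast_det]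
  have hN : IsUnit N.det := by
    rcases s with _ | _ | _
    · simp [← hs] at hdet
    all_goals simp [hNs]
  exact ⟨_, eq_intCast_comp_of_map_intCast_mulVec_eq hN hx⟩

end CommRing

end Matrix

open Matrix

/-- Hoffman–Kruskal integrality: if `A` is totally unimodular and `b` is an integer vector,
then every extreme point of `P = {x : A x ≤ b}` has all entries integer. -/
theorem totallyUnimodular_extreme_point_integral_le {m n : ℕ}
    (A : Matrix (Fin m) (Fin n) ℚ) (hA : A.IsTotallyUnimodular)
    (b : Fin m → ℚ) (hb : ∀ i : Fin m, ∃ z : ℤ, b i = (z : ℚ))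
    (P : Set (Fin n → ℚ)) (hP : P = {x : Fin n → ℚ | A.mulVec x ≤ b})
    (x : Fin n → ℚ)
    (hxP : x ∈ P)
    (hext : ∀ y ∈ P, ∀ z ∈ P, ∀ t : ℚ, 0 < t → t < 1 →
      x = t • y + (1 - t) • z → y = x ∧ z = x) :
    ∀ j : Fin n, ∃ k : ℤ, x j = (k : ℚ) := by
  subst hP
  have hxE : x ∈ Set.extremePoints ℚ {y | A *ᵥ y ≤ b} :=
    ⟨hxP, fun y hy z hz ⟨s, t, hs, ht, hst, hxyz⟩ =>
      (hext y hy z hz s hs (by linarith) (by rw [← hxyz, ← hst, add_sub_cancel_left])).1⟩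
  obtain ⟨e, hdet⟩ := exists_submatrix_det_ne_zero_of_mulVec_injective
    (mulVec_activeRows_injective_of_mem_extremePoints hxE)
  choose c hc using hb
  have hBx : A.submatrix (Subtype.val ∘ e) id *ᵥ x = (↑) ∘ (c ∘ Subtype.val ∘ e) := by
    ext k
    exact (e k).2.trans (hc _)
  obtain ⟨z, hz⟩ := (hA.submatrix _ _).exists_intCast_eq_of_mulVec_eq_intCast hdet hBx
  exact fun j => ⟨z j, congrFun hz j⟩
end

section
/- Let A be an m × n matrix with rational entries that is totally unimodular, and let b be a vector in ℚ^m all of whose entries are integers. Then every extreme point of the polyhedron P = { x ∈ ℚ^n : A x = b and x ≥ 0 (componentwise) } has all entries integer. -/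
/-!
At an extreme point `x` of `{x | A x = b, 0 ≤ x}` no nonzero kernel vector `d` of `A` can be
supported inside `supp x`, since `x ± ε d` would both be feasible for small `ε > 0`. Hence the
columns of `A` on `supp x` are linearly independent, and some choice of rows turns them into a
nonsingular square submatrix `B`. Total unimodularity forces `det B = ±1`, so `B⁻¹` is integral and
`x` restricted to its support, which solves `B y = b`, is an integer vector.
-/
open Matrix Function

section ExtremePoints

variable {K : Type*} [Field K] [LinearOrder K] [IsStrictOrderedRing K]

theorem exists_pos_forall_mul_abs_le {ι : Type*} [Finite ι] {x d : ι → K} (hx : 0 ≤ x)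
    (hd : support d ⊆ support x) : ∃ ε > 0, ∀ i, ε * |d i| ≤ x i := by
  let r : ι → Set.Ioi (0 : K) := fun i =>
    if h : d i = 0 then ⟨1, one_pos⟩
    else ⟨x i / |d i|, div_pos ((hx i).lt_of_ne' (hd h)) (abs_pos.2 h)⟩
  obtain ⟨⟨ε, hε⟩, hle⟩ := Finite.exists_ge r
  refine ⟨ε, hε, fun i => ?_⟩
  by_cases h : d i = 0
  · simpa [h] using hx i
  · have hεi : ε ≤ x i / |d i| := by simpa [r, h] using Subtype.coe_le_coe.2 (hle i)
    exact (le_div_iff₀ (abs_pos.2 h)).1 hεi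

variable {m n : Type*} [Fintype n] {A : Matrix m n K} {b : m → K} {x : n → K}

theorem eq_zero_of_mulVec_eq_zero_of_mem_extremePoints
    (hx : x ∈ Set.extremePoints K {x | A *ᵥ x = b ∧ 0 ≤ x}) {d : n → K} (hAd : A *ᵥ d = 0)
    (hd : support d ⊆ support x) : d = 0 := by
  obtain ⟨⟨hAx, hx0⟩, hext⟩ := hx
  obtain ⟨ε, hε, hle⟩ := exists_pos_forall_mul_abs_le hx0 hd
  have hmem (s : K) (hs : |s| = 1) : x + (s * ε) • d ∈ {x | A *ᵥ x = b ∧ 0 ≤ x} := by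
    refine ⟨by rw [mulVec_add, mulVec_smul, hAd, smul_zero, add_zero, hAx], fun i => ?_⟩
    have hsi : |s * ε * d i| ≤ x i := by
      rw [abs_mul, abs_mul, hs, one_mul, abs_of_pos hε]
      exact hle i
    simpa [add_comm] using neg_le_iff_add_nonneg.1 (neg_le_of_abs_le hsi)
  have hmid : x ∈ openSegment K (x + (1 * ε) • d) (x + (-1 * ε) • d) :=
    ⟨1 / 2, 1 / 2, by norm_num, by norm_num, by norm_num, by module⟩
  have hεd : ε • d = 0 := by
    simpa using hext (hmem 1 (by simp)) (hmem (-1) (by simp)) hmid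
  exact (smul_eq_zero.1 hεd).resolve_left hε.ne'

theorem linearIndepOn_col_support_of_mem_extremePoints
    (hx : x ∈ Set.extremePoints K {x | A *ᵥ x = b ∧ 0 ≤ x}) :
    LinearIndepOn K A.col (support x) := by
  refine linearIndepOn_iff.2 fun l hl hAl => DFunLike.coe_injective ?_
  refine eq_zero_of_mulVec_eq_zero_of_mem_extremePoints hx ?_ fun i hi => hl (by simpa using hi)
  rw [← hAl]
  ext i
  simp [Finsupp.linearCombination_apply, Finsupp.sum_fintype, mulVec, dotProduct, mul_comm]

end ExtremePoints

theorem Matrix.submatrix_val_support_mulVec {m n R : Type*} [Fintype n]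
    [NonUnitalNonAssocSemiring R]
    (A : Matrix m n R) (x : n → R) [Fintype (support x)] :
    A.submatrix id ((↑) : support x → n) *ᵥ (x ∘ (↑)) = A *ᵥ x := by
  classical
  ext i
  rw [mulVec, mulVec, dotProduct, dotProduct,
    ← Fintype.sum_subtype_add_sum_subtype (· ∈ support x),
    Fintype.sum_eq_zero (fun j : {j // j ∉ support x} => A i j * x j)
      fun j => by simp [notMem_support.1 j.2], add_zero]
  exact Finset.sum_congr (by congr!) fun _ _ => rfl

theorem Matrix.exists_isUnit_submatrix_of_linearIndependent_col {K m ι : Type*} [Field K]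
    [Fintype m] [Fintype ι] [DecidableEq ι] {M : Matrix m ι K} (hM : LinearIndependent K M.col) :
    ∃ f : ι → m, IsUnit (M.submatrix f id) := by
  obtain ⟨κ, a, ha, hspan, hli⟩ := exists_linearIndependent' K M.row
  have : Finite κ := Finite.of_injective a ha
  have := Fintype.ofFinite κ
  have hcard : Fintype.card ι = Fintype.card κ := by
    rw [← finrank_span_eq_card hli, hspan, ← rank_eq_finrank_span_row, ← rank_transpose,
      LinearIndependent.rank_matrix hM]
  let e : ι ≃ κ := Fintype.equivOfCardEq hcard
  exact ⟨a ∘ e, linearIndependent_rows_iff_isUnit.1 (hli.comp e e.injective)⟩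

theorem Matrix.IsTotallyUnimodular.exists_eq_map_intCast {m n R : Type*} [CommRing R]
    {A : Matrix m n R} (hA : A.IsTotallyUnimodular) : ∃ A' : Matrix m n ℤ, A = A'.map (↑) := by
  choose σ hσ using hA.apply
  exact ⟨of fun i j => σ i j, by ext i j; simp [hσ]⟩

theorem Matrix.isUnit_det_of_isUnit_map_intCast {ι K : Type*} [Fintype ι] [DecidableEq ι]
    [CommRing K] [CharZero K] {B : Matrix ι ι ℤ} (hB : IsUnit (B.map ((↑) : ℤ → K)))
    (hdet : (B.map ((↑) : ℤ → K)).det ∈ Set.range SignType.cast) : IsUnit B.det := by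
  obtain ⟨σ, hσ⟩ := hdet
  have hne := ((isUnit_iff_isUnit_det _).1 hB).ne_zero
  rw [← Int.cast_det] at hσ hne
  rw [Int.isUnit_iff]
  cases σ
  · exact absurd (by simpa using hσ.symm) hne
  · exact Or.inr (by exact_mod_cast hσ.symm)
  · exact Or.inl (by exact_mod_cast hσ.symm)

theorem Matrix.eq_intCast_comp_of_mulVec_eq {ι R : Type*} [Fintype ι] [DecidableEq ι] [CommRing R]
    {B : Matrix ι ι ℤ} (hB : IsUnit B.det) {w : ι → R} {v : ι → ℤ}
    (h : B.map (↑) *ᵥ w = (↑) ∘ v) : w = (↑) ∘ (B⁻¹ *ᵥ v) := by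
  have hinv : B⁻¹.map ((↑) : ℤ → R) * B.map (↑) = 1 := by
    simpa [nonsing_inv_mul B hB] using
      (Matrix.map_mul (L := B⁻¹) (M := B) (f := Int.castRingHom R)).symm
  ext i
  rw [Function.comp_apply, ← eq_intCast (Int.castRingHom R), RingHom.map_mulVec,
    Int.coe_castRingHom, ← h, mulVec_mulVec, hinv, one_mulVec]

/-- Equality-form integrality: if `A` is totally unimodular and `b` is an integer vector,
then every extreme point of `P = {x : A x = b, x ≥ 0}` has all entries integer. -/
theorem totallyUnimodular_extreme_point_integral_eq {m n : ℕ}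
    (A : Matrix (Fin m) (Fin n) ℚ) (hA : A.IsTotallyUnimodular)
    (b : Fin m → ℚ) (hb : ∀ i : Fin m, ∃ z : ℤ, b i = (z : ℚ))
    (P : Set (Fin n → ℚ)) (hP : P = {x : Fin n → ℚ | A.mulVec x = b ∧ 0 ≤ x})
    (x : Fin n → ℚ)
    (hxP : x ∈ P)
    (hext : ∀ y ∈ P, ∀ z ∈ P, ∀ t : ℚ, 0 < t → t < 1 →
      x = t • y + (1 - t) • z → y = x ∧ z = x) :
    ∀ j : Fin n, ∃ k : ℤ, x j = (k : ℚ) := by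
  classical
  have hx : x ∈ P.extremePoints ℚ := by
    refine mem_extremePoints_iff_left.2 ⟨hxP, fun y hy z hz ⟨t, s, ht, hs, hts, hx⟩ => ?_⟩
    refine (hext y hy z hz t ht (by linarith) ?_).1
    rw [← hx, ← hts, add_sub_cancel_left]
  subst hP
  obtain ⟨f, hf⟩ := exists_isUnit_submatrix_of_linearIndependent_col
    (M := A.submatrix id ((↑) : support x → Fin n))
    (linearIndepOn_col_support_of_mem_extremePoints hx)
  obtain ⟨A', rfl⟩ := hA.exists_eq_map_intCast
  choose b' hb' using hb
  set B := A'.submatrix f ((↑) : support x → Fin n)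
  have hBdet : IsUnit B.det := by
    refine isUnit_det_of_isUnit_map_intCast hf ?_
    rw [← submatrix_map]
    exact (isTotallyUnimodular_iff_fintype _).1 hA _ f _
  have hBx : B.map (↑) *ᵥ (x ∘ (↑)) = (↑) ∘ (b' ∘ f) := by
    ext i
    rw [Function.comp_apply, Function.comp_apply, ← hb', ← hxP.1,
      ← submatrix_val_support_mulVec _ x]
    rfl
  have hxint := eq_intCast_comp_of_mulVec_eq hBdet hBx
  intro j
  by_cases hj : x j = 0
  · exact ⟨0, by simp [hj]⟩
  · exact ⟨_, congrFun hxint ⟨j, hj⟩⟩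
end
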